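/- Let X be a topological group. On the group Aut(X) of bicontinuous group automorphisms of X, the uniform structures of uniform convergence on bounded sets with respect to the left, right, and upper uniform structures of X all coincide. -/

import Mathlib

open Filter Set Pointwise

/-- A subset `A` of a topological group is (coarsely) bounded if for every
increasing exhaustive sequence of open sets `(V n)` with `V n * V n ⊆ V (n+1)`,
some `V k` contains `A`. -/
def CoarselyBdd (X : Type*) [Group X] [TopologicalSpace X] (A : Set X) : Prop :=
  ∀ V : ℕ → Set X, (∀ n, IsOpen (V n)) → (∀ n, V n ⊆ V (n + 1)) →
    (∀ n, V n * V n ⊆ V (n + 1)) → (⋃ n, V n) = Set.univ → ∃ k, A ⊆ V k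
set_option linter.unusedVariables false

/-- The group of bicontinuous automorphisms of a topological group `X`. -/
def contAut (X : Type*) [Group X] [TopologicalSpace X] : Subgroup (MulAut X) where
  carrier := {f | Continuous ⇑f ∧ Continuous ⇑f.symm}
  one_mem' := ⟨continuous_id, continuous_id⟩
  mul_mem' := fun {a b} ha hb => ⟨ha.1.comp hb.1, hb.2.comp ha.2⟩
  inv_mem' := fun {a} ha => ⟨ha.2, ha.1⟩

/-- The uniform structure (given as a uniformity filter) of uniform biconvergence on
bounded sets on `contAut X` with respect to the *upper* uniform structure of `X`,
whose entourages are generated by `{(x,y) | x⁻¹ * y ∈ V ∧ x * y⁻¹ ∈ V}`. -/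
def upperBiUniformity (X : Type*) [Group X] [TopologicalSpace X] :
    Filter (↥(contAut X) × ↥(contAut X)) :=
  ⨅ (B : Set X) (_ : CoarselyBdd X B) (V : Set X) (_ : V ∈ nhds (1 : X)),
    Filter.principal {p | ∀ x ∈ B,
      ((p.1.1 x)⁻¹ * p.2.1 x ∈ V ∧ p.1.1 x * (p.2.1 x)⁻¹ ∈ V) ∧
      ((p.1.1.symm x)⁻¹ * p.2.1.symm x ∈ V ∧ p.1.1.symm x * (p.2.1.symm x)⁻¹ ∈ V)}

/-- The uniform structure (given as a uniformity filter) of uniform biconvergence on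
bounded sets on `contAut X` with respect to the *lower (Roelcke)* uniform structure
of `X`, whose entourages are generated by `{(x,y) | x ∈ V * {y} * V}`. -/
def lowerBiUniformity (X : Type*) [Group X] [TopologicalSpace X] :
    Filter (↥(contAut X) × ↥(contAut X)) :=
  ⨅ (B : Set X) (_ : CoarselyBdd X B) (V : Set X) (_ : V ∈ nhds (1 : X)),
    Filter.principal {p | ∀ x ∈ B,
      p.1.1 x ∈ V * {p.2.1 x} * V ∧ p.1.1.symm x ∈ V * {p.2.1.symm x} * V}

/-- The topology defined by a uniformity filter `U` on `G`. -/
def topOfUniformity {G : Type*} (U : Filter (G × G)) : TopologicalSpace G where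
  IsOpen s := ∀ g ∈ s, {p : G × G | p.1 = g → p.2 ∈ s} ∈ U
  isOpen_univ := fun g _ => by simp
  isOpen_inter := by
    intro s t hs ht g hg
    filter_upwards [hs g hg.1, ht g hg.2] with p h1 h2 he
    exact ⟨h1 he, h2 he⟩
  isOpen_sUnion := by
    intro S hS g hg
    obtain ⟨s, hsS, hgs⟩ := hg
    filter_upwards [hS s hsS g hgs] with p h he
    exact ⟨s, hsS, h he⟩

/-- Uniform convergence on bounded sets w.r.t. the left uniform structure of `X`. -/
def leftConvUniformity (X : Type*) [Group X] [TopologicalSpace X] :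
    Filter (↥(contAut X) × ↥(contAut X)) :=
  ⨅ (B : Set X) (_ : CoarselyBdd X B) (V : Set X) (_ : V ∈ nhds (1 : X)),
    Filter.principal {p | ∀ x ∈ B, (p.1.1 x)⁻¹ * p.2.1 x ∈ V}

/-- Uniform convergence on bounded sets w.r.t. the right uniform structure of `X`. -/
def rightConvUniformity (X : Type*) [Group X] [TopologicalSpace X] :
    Filter (↥(contAut X) × ↥(contAut X)) :=
  ⨅ (B : Set X) (_ : CoarselyBdd X B) (V : Set X) (_ : V ∈ nhds (1 : X)),
    Filter.principal {p | ∀ x ∈ B, p.1.1 x * (p.2.1 x)⁻¹ ∈ V}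

/-- Uniform convergence on bounded sets w.r.t. the upper uniform structure of `X`. -/
def upperConvUniformity (X : Type*) [Group X] [TopologicalSpace X] :
    Filter (↥(contAut X) × ↥(contAut X)) :=
  ⨅ (B : Set X) (_ : CoarselyBdd X B) (V : Set X) (_ : V ∈ nhds (1 : X)),
    Filter.principal {p | ∀ x ∈ B, (p.1.1 x)⁻¹ * p.2.1 x ∈ V ∧ p.1.1 x * (p.2.1 x)⁻¹ ∈ V}

/-!
Inversion maps bounded sets to bounded sets, and for automorphisms `f g` one has
`(f x⁻¹)⁻¹ * g x⁻¹ = f x * (g x)⁻¹`; hence the left entourage of a bounded set `B⁻¹` is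
the right entourage of `B`, so the left and right uniformities agree. The upper uniformity
is their meet.
-/

namespace CoarselyBdd

variable {X : Type*} [Group X] [TopologicalSpace X]

/-- The symmetrised sequence `V n ∩ (V n)⁻¹` is again admissible, and it swallows `B⁻¹`
as soon as it swallows `B`. -/
theorem inv [ContinuousInv X] {B : Set X} (hB : CoarselyBdd X B) : CoarselyBdd X B⁻¹ := by
  intro V hopen hmono hmul hcover
  have hV : Monotone V := monotone_nat_of_le_succ hmono
  have hsymm_mul (n : ℕ) : (V n ∩ (V n)⁻¹) * (V n ∩ (V n)⁻¹) ⊆ V (n + 1) ∩ (V (n + 1))⁻¹ :=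
    subset_inter ((mul_subset_mul inter_subset_left inter_subset_left).trans (hmul n))
      (calc (V n ∩ (V n)⁻¹) * (V n ∩ (V n)⁻¹) ⊆ (V n)⁻¹ * (V n)⁻¹ :=
            mul_subset_mul inter_subset_right inter_subset_right
        _ = (V n * V n)⁻¹ := (mul_inv_rev _ _).symm
        _ ⊆ (V (n + 1))⁻¹ := inv_subset_inv.2 (hmul n))
  have hsymm_cover : (⋃ n, V n ∩ (V n)⁻¹) = univ := by
    refine eq_univ_of_forall fun x => ?_
    obtain ⟨i, hi⟩ := mem_iUnion.1 (hcover ▸ mem_univ x)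
    obtain ⟨j, hj⟩ := mem_iUnion.1 (hcover ▸ mem_univ x⁻¹)
    exact mem_iUnion.2 ⟨max i j, hV (le_max_left i j) hi, hV (le_max_right i j) hj⟩
  obtain ⟨k, hk⟩ := hB (fun n => V n ∩ (V n)⁻¹) (fun n => (hopen n).inter (hopen n).inv)
    (fun n => inter_subset_inter (hmono n) (inv_subset_inv.2 (hmono n))) hsymm_mul hsymm_cover
  exact ⟨k, fun x hx => by simpa using (hk hx).2⟩

end CoarselyBdd

theorem forall_mem_inv_inv_mul_mem_iff {X Y F : Type*} [Group X] [Group Y] [FunLike F X Y]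
    [MonoidHomClass F X Y] (f g : F) (B : Set X) (V : Set Y) :
    (∀ x ∈ B⁻¹, (f x)⁻¹ * g x ∈ V) ↔ ∀ x ∈ B, f x * (g x)⁻¹ ∈ V := by
  refine ⟨fun h x hx => ?_, fun h x hx => ?_⟩
  · simpa using h x⁻¹ (inv_mem_inv.2 hx)
  · simpa using h x⁻¹ hx

section ConvUniformity

variable {X : Type*} [Group X] [TopologicalSpace X]

theorem leftConvUniformity_eq_rightConvUniformity [ContinuousInv X] :
    leftConvUniformity X = rightConvUniformity X := by
  refine le_antisymm (le_iInf₂ fun B hB => le_iInf₂ fun V hV => ?_)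
    (le_iInf₂ fun B hB => le_iInf₂ fun V hV => ?_)
  · refine (iInf₂_le B⁻¹ hB.inv).trans ((iInf₂_le V hV).trans (principal_mono.2 ?_))
    exact fun p hp => (forall_mem_inv_inv_mul_mem_iff p.1.1 p.2.1 B V).1 hp
  · refine (iInf₂_le B⁻¹ hB.inv).trans ((iInf₂_le V hV).trans (principal_mono.2 ?_))
    intro p hp
    simpa using (forall_mem_inv_inv_mul_mem_iff p.1.1 p.2.1 B⁻¹ V).2 hp

theorem upperConvUniformity_eq_inf :
    upperConvUniformity X = leftConvUniformity X ⊓ rightConvUniformity X := by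
  refine le_antisymm (le_inf ?_ ?_) (le_iInf₂ fun B hB => le_iInf₂ fun V hV => ?_)
  · exact le_iInf₂ fun B hB => le_iInf₂ fun V hV =>
      (iInf₂_le B hB).trans ((iInf₂_le V hV).trans (principal_mono.2 fun p hp x hx => (hp x hx).1))
  · exact le_iInf₂ fun B hB => le_iInf₂ fun V hV =>
      (iInf₂_le B hB).trans ((iInf₂_le V hV).trans (principal_mono.2 fun p hp x hx => (hp x hx).2))
  have hleft := le_principal_iff.1 ((iInf₂_le B hB).trans (iInf₂_le V hV) :
    leftConvUniformity X ≤ _)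
  have hright := le_principal_iff.1 ((iInf₂_le B hB).trans (iInf₂_le V hV) :
    rightConvUniformity X ≤ _)
  exact le_principal_iff.2 (mem_of_superset (inter_mem_inf hleft hright)
    fun p hp x hx => ⟨hp.1 x hx, hp.2 x hx⟩)

end ConvUniformity

/-- On the group of bicontinuous automorphisms of a topological group, the uniform
structures of uniform convergence on bounded sets with respect to the left, right,
and upper uniform structures of `X` all coincide. -/
theorem left_right_upper_conv_uniformities_eq {X : Type*} [Group X]
    [TopologicalSpace X] [IsTopologicalGroup X] :
    leftConvUniformity X = rightConvUniformity X ∧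
    leftConvUniformity X = upperConvUniformity X := by
  refine ⟨leftConvUniformity_eq_rightConvUniformity, ?_⟩
  rw [upperConvUniformity_eq_inf, ← leftConvUniformity_eq_rightConvUniformity, inf_idem]
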